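/- arXiv:0902.1667 — 2 statements merged into one kernel-verified Lean document; each statement's English description precedes it below -/
import Mathlib

section
/- Let C be a finite dimensional algebra over an algebraically closed field, with a decomposition C = C₀ ⊕ C_R into projective direct summands such that Hom_C(C_R, C₀) = 0. Then the projective modules C₀ and ν C_R have no common composition factors, where ν is the Nakayama functor; consequently Hom_C(C₀, ν C_R) = 0 and Hom_C(ν C_R, C₀) = 0. -/
/-- `S` is a composition factor of the `A`-module `M`: there are submodules `N₁ ≤ N₂`
(here: a submodule `N₁` of a submodule `N₂`) with `N₂/N₁ ≅ S`. -/
def IsCompositionFactor (A : Type*) [Ring A] (S : Type*) [AddCommGroup S] [Module A S]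
    (M : Type*) [AddCommGroup M] [Module A M] : Prop :=
  ∃ (N₂ : Submodule A M) (N₁ : Submodule A ↥N₂), Nonempty ((↥N₂ ⧸ N₁) ≃ₗ[A] S)

/-- If `P` is projective with `Hom(P, X) = 0`, then `Hom(P, S) = 0` for any
subquotient `S` of `X`. -/
theorem subsingleton_hom_of_compFactor {A : Type} [Ring A]
    {P X S : Type} [AddCommGroup P] [Module A P] [AddCommGroup X] [Module A X]
    [AddCommGroup S] [Module A S]
    (hP : Module.Projective A P) (hX : Subsingleton (P →ₗ[A] X))
    (hS : IsCompositionFactor A S X) : Subsingleton (P →ₗ[A] S) := by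
  refine subsingleton_of_forall_eq 0 fun f => ?_
  by_contra hf
  obtain ⟨N₂, N₁, ⟨e⟩⟩ := hS
  obtain ⟨p, hp⟩ := DFunLike.ne_iff.mp hf
  obtain ⟨h, hh⟩ := Module.projective_lifting_property N₁.mkQ
    (e.symm.toLinearMap ∘ₗ f) (Submodule.mkQ_surjective N₁)
  have h1 : N₂.subtype ∘ₗ h = 0 := Subsingleton.elim _ _
  have h2 : h p = 0 := by
    have := congrFun (congrArg DFunLike.coe h1) p
    simpa [Submodule.coe_eq_zero] using this
  have h3 : N₁.mkQ (h p) = e.symm (f p) := congrFun (congrArg DFunLike.coe hh) p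
  rw [h2, map_zero] at h3
  apply hp
  have : e.symm (f p) = e.symm 0 := by rw [← h3, map_zero]
  simpa using e.symm.injective this

/-- Let `C = C₀ ⊕ C_R` be a decomposition of a finite dimensional algebra over an
algebraically closed field into projective direct summands with `Hom_C(C_R, C₀) = 0`.
Then `C₀` and `ν C_R` have no common composition factors (where `ν` is the Nakayama
functor, characterized by `Hom_A(M, νP) ≅ D Hom_A(P, M)`); consequently
`Hom_C(C₀, ν C_R) = 0` and `Hom_C(ν C_R, C₀) = 0`. -/
theorem no_common_composition_factors
    (k : Type) [Field k] [IsAlgClosed k]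
    (A : Type) [Ring A] [Algebra k A] [FiniteDimensional k A]
    (C0 : Type) [AddCommGroup C0] [Module k C0] [Module A C0] [IsScalarTower k A C0]
    (CR : Type) [AddCommGroup CR] [Module k CR] [Module A CR] [IsScalarTower k A CR]
    (νCR : Type) [AddCommGroup νCR] [Module k νCR] [Module A νCR] [IsScalarTower k A νCR]
    [SMulCommClass A k νCR]
    (hproj0 : Module.Projective A C0) (hprojR : Module.Projective A CR)
    -- `C = C₀ ⊕ C_R` is a decomposition of the regular module:
    (hdec : Nonempty (A ≃ₗ[A] C0 × CR))
    -- `Hom_C(C_R, C₀) = 0`: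
    (hhom : Subsingleton (CR →ₗ[A] C0))
    -- `ν C_R` is the Nakayama shift of `C_R`: `Hom_A(M, ν C_R) ≅ D Hom_A(C_R, M)`:
    (hν : ∀ (M : Type) [AddCommGroup M] [Module k M] [Module A M] [IsScalarTower k A M]
      [SMulCommClass A k M],
      Nonempty ((M →ₗ[A] νCR) ≃ₗ[k] ((CR →ₗ[A] M) →ₗ[k] k))) :
    (∀ (S : Type) [AddCommGroup S] [Module A S], IsSimpleModule A S →
      ¬(IsCompositionFactor A S C0 ∧ IsCompositionFactor A S νCR)) ∧
    Subsingleton (C0 →ₗ[A] νCR) ∧ Subsingleton (νCR →ₗ[A] C0) := by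
  -- `Hom(C₀, ν C_R) ≅ D Hom(C_R, C₀) = 0`
  have L0 : Subsingleton (C0 →ₗ[A] νCR) := by
    obtain ⟨e⟩ := hν C0
    have : Subsingleton ((CR →ₗ[A] C0) →ₗ[k] k) := by
      constructor
      intro f g
      ext x
      rw [Subsingleton.elim x 0, map_zero, map_zero]
    exact e.toEquiv.subsingleton
  -- a module receiving no homs from `C₀` and `C_R` is trivial
  have tool : ∀ (M : Type) [AddCommGroup M] [Module A M],
      Subsingleton (C0 →ₗ[A] M) → Subsingleton (CR →ₗ[A] M) → Subsingleton M := by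
    intro M _ _ h0 hR
    obtain ⟨e⟩ := hdec
    refine subsingleton_of_forall_eq 0 fun m => ?_
    set φ : A →ₗ[A] M := LinearMap.toSpanSingleton A M m with hφ
    set ψ : C0 × CR →ₗ[A] M := φ ∘ₗ e.symm.toLinearMap with hψ
    have h1 : ψ ∘ₗ LinearMap.inl A C0 CR = 0 := Subsingleton.elim _ _
    have h2 : ψ ∘ₗ LinearMap.inr A C0 CR = 0 := Subsingleton.elim _ _
    have key : ∀ p : C0 × CR, ψ p = 0 := by
      intro p
      have hp : p = ((p.1, 0) : C0 × CR) + (0, p.2) := by simp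
      rw [hp, map_add]
      have a1 : ψ (p.1, 0) = 0 := congrFun (congrArg DFunLike.coe h1) p.1
      have a2 : ψ (0, p.2) = 0 := congrFun (congrArg DFunLike.coe h2) p.2
      rw [a1, a2, add_zero]
    have : φ 1 = 0 := by
      have := key (e 1)
      simpa [hψ] using this
    simpa [hφ, LinearMap.toSpanSingleton_apply] using this
  -- Part 1: no common composition factors
  have part1 : ∀ (S : Type) [AddCommGroup S] [Module A S], IsSimpleModule A S →
      ¬(IsCompositionFactor A S C0 ∧ IsCompositionFactor A S νCR) := by
    intro S _ _ hsimple ⟨hc0, hcν⟩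
    have s1 : Subsingleton (CR →ₗ[A] S) :=
      subsingleton_hom_of_compFactor hprojR hhom hc0
    have s2 : Subsingleton (C0 →ₗ[A] S) :=
      subsingleton_hom_of_compFactor hproj0 L0 hcν
    have hsub : Subsingleton S := tool S s2 s1
    haveI := hsimple
    have : Nontrivial S := IsSimpleModule.nontrivial A S
    exact false_of_nontrivial_of_subsingleton S
  refine ⟨part1, L0, ?_⟩
  -- Part 3: `Hom(ν C_R, C₀) = 0`
  -- `C₀` is finite dimensional over `k`, hence Artinian over `A`
  haveI hfd : FiniteDimensional k C0 := by
    obtain ⟨e⟩ := hdec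
    have hs : Function.Surjective
        ((LinearMap.fst A C0 CR ∘ₗ e.toLinearMap).restrictScalars k) := fun x =>
      ⟨e.symm (x, 0), by simp⟩
    exact Module.Finite.of_surjective _ hs
  haveI hart : IsArtinian A C0 := isArtinian_of_tower k inferInstance
  haveI : IsAtomic (Submodule A C0) :=
    isAtomic_of_orderBot_wellFounded_lt wellFounded_lt
  refine subsingleton_of_forall_eq 0 fun f => ?_
  by_contra hf
  have hr : LinearMap.range f ≠ ⊥ := by rwa [Ne, LinearMap.range_eq_bot]
  obtain ⟨a, ha, hle⟩ := (eq_bot_or_exists_atom_le (LinearMap.range f)).resolve_left hr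
  haveI hsa : IsSimpleModule A ↥a := isSimpleModule_iff_isAtom.mpr ha
  refine part1 ↥a hsa ⟨⟨a, ⊥, ⟨Submodule.quotEquivOfEqBot ⊥ rfl⟩⟩, ?_⟩
  -- `↥a` is a quotient of the submodule `f ⁻¹ a` of `ν C_R`
  have hres : ∀ x ∈ Submodule.comap f a, f x ∈ a := fun x hx => hx
  refine ⟨Submodule.comap f a, LinearMap.ker (f.restrict hres), ⟨?_⟩⟩
  refine LinearMap.quotKerEquivOfSurjective _ ?_
  rintro ⟨s, hs⟩
  obtain ⟨x, hx⟩ := hle hs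
  refine ⟨⟨x, by simp [Submodule.mem_comap, hx, hs]⟩, ?_⟩
  ext
  simpa [LinearMap.restrict_apply] using hx
end

section
/- With C = C₀ ⊕ C_R of global dimension two satisfying Hom_C(C_R, C₀) = 0 and Ext¹_C(ν C_R, C₀) = 0, one has Hom_{D^b(mod C)}(F C₀, C_R[i]) = 0 for all integers i, where F = τ⁻¹[1]. -/
open CategoryTheory CategoryTheory.Limits CategoryTheory.Pretriangulated

/-- With `C = C₀ ⊕ C_R` of global dimension two satisfying the 2-APR hypotheses
`Hom_C(C_R, C₀) = 0` and `Ext¹_C(ν C_R, C₀) = 0`, one has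
`Hom_{D^b(mod C)}(F C₀, C_R[i]) = 0` for all integers `i`, where `F = τ⁻¹[1] = ν⁻¹[2]`.
(The derived category is abstracted as a triangulated category `D` with Serre-type
duality `ν`; `C₀`, `CR` are objects concentrated in degree `0`.) -/
theorem two_apr_hom_FC0_CR_vanishes
    (D : Type*) [Category D] [Preadditive D] [HasZeroObject D] [HasShift D ℤ]
    [∀ n : ℤ, (shiftFunctor D n).Additive] [Pretriangulated D]
    (ν : D ≌ D)
    (hSerre : ∀ X Y : D, Subsingleton (X ⟶ Y) ↔ Subsingleton (Y ⟶ ν.functor.obj X))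
    (C0 CR : D)
    -- projectives concentrated in degree 0 (`Ext^i(C_R, C₀) = 0` for `i ≠ 0`):
    (hproj : ∀ i : ℤ, i ≠ 0 → Subsingleton (CR ⟶ C0⟦i⟧))
    -- `Hom_C(C_R, C₀) = 0`:
    (hHom : Subsingleton (CR ⟶ C0))
    -- `Ext¹_C(ν C_R, C₀) = 0`:
    (hExt1 : Subsingleton (ν.functor.obj CR ⟶ C0⟦(1 : ℤ)⟧)) :
    ∀ i : ℤ, Subsingleton (((ν.inverse.obj C0)⟦(2 : ℤ)⟧) ⟶ CR⟦i⟧) := by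

  intro i
  -- Step 1: Hom(CR, C0⟦2-i⟧) is subsingleton
  have key : Subsingleton (CR ⟶ C0⟦(2 - i : ℤ)⟧) := by
    by_cases h : i = 2
    · subst h
      haveI := hHom
      norm_num
      exact (Iso.homCongr (Iso.refl CR) ((shiftFunctorZero D ℤ).app C0 ≪≫ Iso.refl C0)).subsingleton
    · exact hproj _ (by omega)
  -- Step 2: transfer to Hom(CR⟦i-2⟧, C0)
  have key2 : Subsingleton (CR⟦(i - 2 : ℤ)⟧ ⟶ C0) := by
    haveI := key
    let e1 : (CR⟦(i - 2 : ℤ)⟧ ⟶ C0) ≃ ((CR⟦(i - 2 : ℤ)⟧)⟦(2 - i : ℤ)⟧ ⟶ C0⟦(2 - i : ℤ)⟧) :=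
      (Functor.FullyFaithful.ofFullyFaithful (shiftFunctor D (2 - i : ℤ))).homEquiv
    have iso1 : (CR⟦(i - 2 : ℤ)⟧)⟦(2 - i : ℤ)⟧ ≅ CR :=
      ((shiftFunctorAdd' D (i - 2 : ℤ) (2 - i : ℤ) 0 (by ring)).symm.app CR).trans
        ((shiftFunctorZero D ℤ).app CR)
    exact (e1.trans (Iso.homCongr iso1 (Iso.refl _))).subsingleton
  -- Step 3: transfer to Hom(CR⟦i-2⟧, ν⁻¹C0 ... ) via Serre duality
  have key3 : Subsingleton (ν.inverse.obj C0 ⟶ CR⟦(i - 2 : ℤ)⟧) := by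
    rw [hSerre]
    haveI := key2
    exact (Iso.homCongr (Iso.refl _) (ν.counitIso.app C0 ≪≫ Iso.refl C0)).subsingleton
  -- Step 4: shift up by 2
  haveI := key3
  let e2 : (((ν.inverse.obj C0)⟦(2 : ℤ)⟧) ⟶ CR⟦i⟧) ≃
      (((ν.inverse.obj C0)⟦(2 : ℤ)⟧)⟦(-2 : ℤ)⟧ ⟶ (CR⟦i⟧)⟦(-2 : ℤ)⟧) :=
    (Functor.FullyFaithful.ofFullyFaithful (shiftFunctor D (-2 : ℤ))).homEquiv
  have isoA : ((ν.inverse.obj C0)⟦(2 : ℤ)⟧)⟦(-2 : ℤ)⟧ ≅ ν.inverse.obj C0 :=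
    ((shiftFunctorAdd' D (2 : ℤ) (-2 : ℤ) 0 (by ring)).symm.app _).trans
      ((shiftFunctorZero D ℤ).app _)
  have isoB : (CR⟦i⟧)⟦(-2 : ℤ)⟧ ≅ CR⟦(i - 2 : ℤ)⟧ :=
    ((shiftFunctorAdd' D i (-2 : ℤ) (i - 2) (by ring)).symm.app CR)
  exact (e2.trans (Iso.homCongr isoA isoB)).subsingleton
end
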